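/- arXiv:2004.05602 — 3 statements merged into one kernel-verified Lean document; each statement's English description precedes it below -/
import Mathlib

section
/- Let κ > 1, A₁ > 0, D > 0, and let g : ℕ → ℂ be multiplicative, supported on squarefree numbers, with |g(n)| ≤ d_{κ+1}(n) for every N-smooth n, and g(p) = 0 for every prime p ≤ C. Let q < N be a squarefree positive integer such that every prime p | q satisfies p > C and Σ_{p | q} (log p)^{A₁+1}/p^{3/4} ≤ D. Define H_q(z) = Π_{p|q}(1 + g(p)/p^z) and G̃_q(z) = Π_{p|q}(1 + |g(p)|/p^z) for Re(z) ≥ 1. Then for every positive integer h: max{ |(H_q^{−1})^{(h)}(1)|, |G̃_q^{(h)}(1)| } ≤ C' · C^{−1/5}, where C' depends only on h, κ, A₁ and D, provided C is sufficiently large in terms of κ and h (in particular C > κ+1). Moreover, there are positive constants c₁, c₂ depending only on κ and D such that c₁ ≤ |H_q^{−1}(1)| ≤ c₂ and c₁ ≤ G̃_q(1) ≤ c₂. -/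
open Finset

/-- The real `κ`-fold divisor function `d_κ`, given on prime powers `p^k` by
`κ(κ+1)⋯(κ+k−1)/k!`. -/
noncomputable def dR (κ : ℝ) (n : ℕ) : ℝ :=
  n.factorization.prod fun _ k => (∏ i ∈ Finset.range k, (κ + (i : ℝ))) / (Nat.factorial k : ℝ)

/-!
On the disc `|z - 1| ≤ 1/20` the Euler factor of a prime `p > C` differs from `1` by at most
`(κ+1) p^(-19/20) ≤ (κ+1) C^(-1/5) (log p)^(A₁+1) / p^(3/4)`, so `G̃_q`, `H_q` and `H_q⁻¹` stay
within `O(D C^(-1/5))` of `1` there. A derivative of order `h ≥ 1` does not see the constant `1`,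
and Cauchy's estimate on that disc bounds it by `O_h(D C^(-1/5))`.

At `z = 1` every factor is `1 + w` with `|w| ≤ (κ+1)/p`; as `p` is an integer exceeding `κ + 1`,
`(κ+1)/p ≤ 1 - δ` for some `δ = δ(κ) > 0`, and `1 - x ≥ exp(-x/δ)` on `[0, 1 - δ]`. Together with
`∑ 1/p ≤ D` this pins both products between `exp(∓(κ+1)D/δ)`.
-/

open Metric
open scoped Nat

theorem norm_iteratedDeriv_le_of_forall_mem_sphere_norm_sub_le {f : ℂ → ℂ} {c w : ℂ}
    {r M : ℝ} {n : ℕ} (hn : n ≠ 0) (hr : 0 < r) (hf : DifferentiableOn ℂ f (closedBall c r))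
    (hM : ∀ z ∈ sphere c r, ‖f z - w‖ ≤ M) :
    ‖iteratedDeriv n f c‖ ≤ n ! * M / r ^ n := by
  have hcauchy := Complex.norm_iteratedDeriv_le_of_forall_mem_sphere_norm_le n hr
    ((hf.sub_const w).diffContOnCl_ball subset_rfl) hM
  rw [← iteratedDeriv_const_add (Nat.pos_of_ne_zero hn) w] at hcauchy
  simpa only [add_sub_cancel] using hcauchy

theorem norm_prod_one_add_sub_one_le_two_mul {ι R : Type*} [NormedCommRing R] [NormOneClass R]
    (s : Finset ι) (w : ι → R) (hw : ∑ i ∈ s, ‖w i‖ ≤ 1) :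
    ‖∏ i ∈ s, (1 + w i) - 1‖ ≤ 2 * ∑ i ∈ s, ‖w i‖ := by
  have hsum : 0 ≤ ∑ i ∈ s, ‖w i‖ := sum_nonneg fun i _ => norm_nonneg _
  calc ‖∏ i ∈ s, (1 + w i) - 1‖ ≤ Real.exp (∑ i ∈ s, ‖w i‖) - 1 := s.norm_prod_one_add_sub_one_le w
    _ ≤ |Real.exp (∑ i ∈ s, ‖w i‖) - 1| := le_abs_self _
    _ ≤ 2 * ∑ i ∈ s, ‖w i‖ := by
      have := Real.abs_exp_sub_one_le (x := ∑ i ∈ s, ‖w i‖) (by rwa [abs_of_nonneg hsum])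
      rwa [abs_of_nonneg hsum] at this

theorem norm_inv_sub_one_le_two_mul {K : Type*} [NormedDivisionRing K] {x : K}
    (hx : ‖x - 1‖ ≤ 1 / 2) : ‖x⁻¹ - 1‖ ≤ 2 * ‖x - 1‖ := by
  have hx_norm : 1 / 2 ≤ ‖x‖ := by
    have := norm_sub_norm_le (1 : K) (1 - x)
    rw [norm_one, sub_sub_cancel, norm_sub_rev] at this
    linarith
  have hx0 : x ≠ 0 := norm_pos_iff.1 (by linarith)
  calc ‖x⁻¹ - 1‖ = ‖x - 1‖ / ‖x‖ := by
        rw [← norm_div, sub_div, div_self hx0, inv_eq_one_div, norm_sub_rev]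
    _ ≤ 2 * ‖x - 1‖ := by
      rw [div_le_iff₀ (by linarith)]; nlinarith [norm_nonneg (x - 1)]

theorem exp_neg_div_le_one_sub {x δ : ℝ} (hδ : 0 < δ) (hx : 0 ≤ x) (hxδ : x ≤ 1 - δ) :
    Real.exp (-(x / δ)) ≤ 1 - x := by
  have hpos : 0 < 1 + x / δ := by positivity
  calc Real.exp (-(x / δ)) ≤ (1 + x / δ)⁻¹ := by
        rw [Real.exp_neg]
        exact inv_anti₀ hpos (by linarith [Real.add_one_le_exp (x / δ)])
    _ = δ / (δ + x) := by field_simp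
    _ ≤ 1 - x := by
      rw [div_le_iff₀ (by positivity)]
      nlinarith

theorem exp_neg_sum_div_le_norm_prod_one_add {ι K : Type*} [NormedField K] (s : Finset ι)
    {w : ι → K} {δ : ℝ} (hδ : 0 < δ) (hw : ∀ i ∈ s, ‖w i‖ ≤ 1 - δ) :
    Real.exp (-((∑ i ∈ s, ‖w i‖) / δ)) ≤ ‖∏ i ∈ s, (1 + w i)‖ := by
  rw [norm_prod, sum_div, ← sum_neg_distrib, Real.exp_sum]
  refine prod_le_prod (fun _ _ => (Real.exp_pos _).le) fun i hi => ?_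
  calc Real.exp (-(‖w i‖ / δ)) ≤ 1 - ‖w i‖ :=
        exp_neg_div_le_one_sub hδ (norm_nonneg _) (hw i hi)
    _ ≤ ‖1 + w i‖ := by simpa using norm_sub_norm_le (1 : K) (-w i)

theorem norm_prod_one_add_le_exp_sum {ι R : Type*} [NormedCommRing R] [NormOneClass R]
    (s : Finset ι) (w : ι → R) : ‖∏ i ∈ s, (1 + w i)‖ ≤ Real.exp (∑ i ∈ s, ‖w i‖) := by
  have := s.norm_prod_one_add_sub_one_le w
  have := norm_le_norm_sub_add (∏ i ∈ s, (1 + w i)) 1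
  rw [norm_one] at this
  linarith

theorem sub_le_re_of_mem_closedBall {c z : ℂ} {r : ℝ} (hz : z ∈ closedBall c r) :
    c.re - r ≤ z.re := by
  have hre := Complex.abs_re_le_norm (z - c)
  rw [← Complex.dist_eq, Complex.sub_re] at hre
  linarith [(abs_le.1 (hre.trans (mem_closedBall.1 hz))).1]

theorem norm_div_natCast_cpow_le {p : ℕ} (hp : 0 < p) (a : ℂ) {z : ℂ} {σ : ℝ} (hz : σ ≤ z.re) :
    ‖a / (p : ℂ) ^ z‖ ≤ ‖a‖ / (p : ℝ) ^ σ := by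
  rw [norm_div, Complex.norm_natCast_cpow_of_pos hp]
  gcongr
  exact Nat.one_le_cast.2 hp

theorem one_le_log_natCast {p : ℕ} (hp : 2 < p) : 1 ≤ Real.log p := by
  have hp3 : (3 : ℝ) ≤ p := by exact_mod_cast hp
  rw [Real.le_log_iff_exp_le (by linarith)]
  linarith [Real.exp_one_lt_d9]

theorem inv_rpow_add_le_mul_log_rpow_div_rpow {x C a t b : ℝ} (hC : 0 < C) (hCx : C ≤ x)
    (ht : 0 ≤ t) (hx : 1 ≤ Real.log x) (hb : 0 ≤ b) :
    (x ^ (a + t))⁻¹ ≤ C ^ (-t) * (Real.log x ^ b / x ^ a) := by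
  have hx0 : 0 < x := hC.trans_le hCx
  rw [Real.rpow_add hx0, mul_inv, Real.rpow_neg hC.le, div_eq_mul_inv]
  calc (x ^ a)⁻¹ * (x ^ t)⁻¹ ≤ (x ^ a)⁻¹ * (C ^ t)⁻¹ := by gcongr
    _ = (C ^ t)⁻¹ * (1 * (x ^ a)⁻¹) := by ring
    _ ≤ (C ^ t)⁻¹ * (Real.log x ^ b * (x ^ a)⁻¹) := by
      gcongr
      exact Real.one_le_rpow hx hb

theorem sum_norm_div_cpow_le {s : Finset ℕ} {a : ℕ → ℂ} {K C D b t : ℝ} {z : ℂ} (hK : 0 ≤ K)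
    (hC : 2 ≤ C) (hs : ∀ p ∈ s, C < p ∧ ‖a p‖ ≤ K) (hb : 0 ≤ b)
    (hsum : ∑ p ∈ s, Real.log p ^ b / (p : ℝ) ^ ((3 : ℝ) / 4) ≤ D) (ht : 0 ≤ t)
    (hz : 3 / 4 + t ≤ z.re) :
    ∑ p ∈ s, ‖a p / (p : ℂ) ^ z‖ ≤ K * D * C ^ (-t) := by
  calc ∑ p ∈ s, ‖a p / (p : ℂ) ^ z‖
      ≤ ∑ p ∈ s, K * (C ^ (-t) * (Real.log p ^ b / (p : ℝ) ^ ((3 : ℝ) / 4))) := by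
        refine sum_le_sum fun p hp => ?_
        obtain ⟨hCp, hap⟩ := hs p hp
        have hp2 : 2 < p := by exact_mod_cast hC.trans_lt hCp
        calc ‖a p / (p : ℂ) ^ z‖ ≤ ‖a p‖ / (p : ℝ) ^ (3 / 4 + t) :=
              norm_div_natCast_cpow_le (by omega) _ hz
          _ ≤ K * (C ^ (-t) * (Real.log p ^ b / (p : ℝ) ^ ((3 : ℝ) / 4))) := by
            rw [div_eq_mul_inv]
            gcongr
            exact inv_rpow_add_le_mul_log_rpow_div_rpow (by linarith) hCp.le ht
              (one_le_log_natCast hp2) hb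
    _ = K * C ^ (-t) * ∑ p ∈ s, Real.log p ^ b / (p : ℝ) ^ ((3 : ℝ) / 4) := by
      rw [mul_sum]; simp only [mul_assoc]
    _ ≤ K * D * C ^ (-t) := by
      rw [mul_right_comm]
      gcongr

theorem exists_pos_forall_div_natCast_le_one_sub {y : ℝ} (hy : 0 ≤ y) :
    ∃ δ, 0 < δ ∧ δ ≤ 1 ∧ ∀ p : ℕ, y < p → y / p ≤ 1 - δ := by
  have hm : y < ⌊y⌋₊ + 1 := Nat.lt_floor_add_one y
  refine ⟨1 - y / (⌊y⌋₊ + 1), by rw [sub_pos, div_lt_one (by positivity)]; exact hm,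
    by linarith [div_nonneg hy (by positivity : (0 : ℝ) ≤ ⌊y⌋₊ + 1)], fun p hp => ?_⟩
  have hfloor : (⌊y⌋₊ : ℝ) + 1 ≤ p := by exact_mod_cast (Nat.floor_lt hy).2 hp
  rw [sub_sub_cancel]
  gcongr

theorem sum_inv_natCast_le {s : Finset ℕ} {D b : ℝ} (hs : ∀ p ∈ s, 2 < p) (hb : 0 ≤ b)
    (hsum : ∑ p ∈ s, Real.log p ^ b / (p : ℝ) ^ ((3 : ℝ) / 4) ≤ D) :
    ∑ p ∈ s, (p : ℝ)⁻¹ ≤ D := by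
  refine (sum_le_sum fun p hp => ?_).trans hsum
  have hp2 := hs p hp
  have key := inv_rpow_add_le_mul_log_rpow_div_rpow (a := (3 : ℝ) / 4) (t := 1 / 4) one_pos
    (by exact_mod_cast hp2.le.trans' one_le_two) (by norm_num) (one_le_log_natCast hp2) hb
  rwa [Real.one_rpow, one_mul, show (3 : ℝ) / 4 + 1 / 4 = 1 by norm_num, Real.rpow_one] at key

theorem sum_norm_div_natCast_le {s : Finset ℕ} {a : ℕ → ℂ} {K D b : ℝ} (hK : 2 ≤ K)
    (hs : ∀ p ∈ s, K < p ∧ ‖a p‖ ≤ K) (hb : 0 ≤ b)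
    (hsum : ∑ p ∈ s, Real.log p ^ b / (p : ℝ) ^ ((3 : ℝ) / 4) ≤ D) :
    ∑ p ∈ s, ‖a p‖ / (p : ℝ) ≤ K * D :=
  calc ∑ p ∈ s, ‖a p‖ / (p : ℝ) ≤ ∑ p ∈ s, K * (p : ℝ)⁻¹ :=
        sum_le_sum fun p hp => by rw [div_eq_mul_inv]; gcongr; exact (hs p hp).2
    _ = K * ∑ p ∈ s, (p : ℝ)⁻¹ := (mul_sum ..).symm
    _ ≤ K * D := mul_le_mul_of_nonneg_left (sum_inv_natCast_le
        (fun p hp => by exact_mod_cast hK.trans_lt (hs p hp).1) hb hsum) (by linarith)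

theorem exists_bounds_prod_one_add_div {K D b : ℝ} (hK : 2 ≤ K) (hD : 0 ≤ D) (hb : 0 ≤ b) :
    ∃ c > 0, ∀ (s : Finset ℕ) (a : ℕ → ℂ), (∀ p ∈ s, K < p ∧ ‖a p‖ ≤ K) →
      ∑ p ∈ s, Real.log p ^ b / (p : ℝ) ^ ((3 : ℝ) / 4) ≤ D →
      c ≤ ‖(∏ p ∈ s, (1 + a p / (p : ℂ)))⁻¹‖ ∧ ‖(∏ p ∈ s, (1 + a p / (p : ℂ)))⁻¹‖ ≤ c⁻¹ ∧
      c ≤ ∏ p ∈ s, (1 + ‖a p‖ / (p : ℝ)) ∧ ∏ p ∈ s, (1 + ‖a p‖ / (p : ℝ)) ≤ c⁻¹ := by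
  obtain ⟨δ, hδ0, hδ1, hδ⟩ := exists_pos_forall_div_natCast_le_one_sub (y := K) (by linarith)
  refine ⟨Real.exp (-(K * D / δ)), Real.exp_pos _, fun s a hs hsum => ?_⟩
  have hnorm : ∀ p ∈ s, ‖a p / (p : ℂ)‖ = ‖a p‖ / p := fun p _ => by
    rw [norm_div, Complex.norm_natCast]
  have hX := sum_norm_div_natCast_le hK hs hb hsum
  have hKD : K * D ≤ K * D / δ := le_div_self (mul_nonneg (by linarith) hD) hδ0 hδ1
  set P := ∏ p ∈ s, (1 + a p / (p : ℂ))
  have hP_le : ‖P‖ ≤ Real.exp (K * D / δ) := (norm_prod_one_add_le_exp_sum s _).trans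
    (Real.exp_le_exp.2 ((sum_congr rfl hnorm).trans_le (hX.trans hKD)))
  have hP_ge : Real.exp (-(K * D / δ)) ≤ ‖P‖ := by
    refine le_trans (Real.exp_le_exp.2 ?_) (exp_neg_sum_div_le_norm_prod_one_add s hδ0
      fun p hp => hnorm p hp ▸ le_trans (by gcongr; exact (hs p hp).2) (hδ p (hs p hp).1))
    rw [sum_congr rfl hnorm, neg_le_neg_iff]
    gcongr
  have hcinv : (Real.exp (-(K * D / δ)))⁻¹ = Real.exp (K * D / δ) := by
    rw [Real.exp_neg, inv_inv]
  rw [norm_inv, hcinv]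
  refine ⟨?_, ?_, ?_, ?_⟩
  · rw [Real.exp_neg]
    exact inv_anti₀ ((Real.exp_pos _).trans_le hP_ge) hP_le
  · exact hcinv ▸ inv_anti₀ (Real.exp_pos _) hP_ge
  · refine le_trans (Real.exp_le_one_iff.2 (neg_nonpos.2 (by positivity))) ?_
    exact one_le_prod fun p _ => le_add_of_nonneg_right (by positivity)
  · exact (Real.prod_one_add_le_exp_sum s fun p => by positivity).trans
      (Real.exp_le_exp.2 (hX.trans hKD))

theorem dR_prime (κ : ℝ) {p : ℕ} (hp : p.Prime) : dR κ p = κ := by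
  rw [dR, hp.factorization, Finsupp.prod_single_index] <;> simp

theorem forall_mem_primeFactors_lt_and_norm_le {κ C : ℝ} {N q : ℕ} {g : ℕ → ℂ}
    (hg : ∀ n : ℕ, 0 < n → (∀ p : ℕ, p.Prime → p ∣ n → p ≤ N) → ‖g n‖ ≤ dR κ n)
    (hqN : q ≤ N) (hqC : ∀ p : ℕ, p.Prime → p ∣ q → C < p) :
    ∀ p ∈ q.primeFactors, C < p ∧ ‖g p‖ ≤ κ := by
  intro p hp
  obtain ⟨hpp, hpq, hq0⟩ := Nat.mem_primeFactors.1 hp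
  have hpN : p ≤ N := (Nat.le_of_dvd (Nat.pos_of_ne_zero hq0) hpq).trans hqN
  refine ⟨hqC p hpp hpq, ?_⟩
  simpa only [dR_prime κ hpp] using
    hg p hpp.pos fun r _ hrp => (Nat.le_of_dvd hpp.pos hrp).trans hpN

noncomputable def eulerProduct (s : Finset ℕ) (a : ℕ → ℂ) (z : ℂ) : ℂ :=
  ∏ p ∈ s, (1 + a p / (p : ℂ) ^ z)

section EulerProduct

variable {s : Finset ℕ} {a : ℕ → ℂ} {c z : ℂ} {r ε : ℝ} {n : ℕ}

theorem differentiable_eulerProduct (hs : ∀ p ∈ s, p ≠ 0) :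
    Differentiable ℂ (eulerProduct s a) := by
  unfold eulerProduct
  refine Differentiable.fun_finsetProd fun p hp => ?_
  refine (differentiable_const _).add ((differentiable_const _).div
    (differentiable_id.const_cpow (Or.inl (by exact_mod_cast hs p hp))) fun z => ?_)
  exact Complex.cpow_ne_zero_iff.2 (Or.inl (by exact_mod_cast hs p hp))

theorem norm_eulerProduct_sub_one_le (hε : ε ≤ 1 / 2)
    (hsum : ∑ p ∈ s, ‖a p / (p : ℂ) ^ z‖ ≤ ε) : ‖eulerProduct s a z - 1‖ ≤ 2 * ε :=
  (norm_prod_one_add_sub_one_le_two_mul s _ (by linarith)).trans (by linarith)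

theorem norm_iteratedDeriv_eulerProduct_le (hs : ∀ p ∈ s, p ≠ 0) (hn : n ≠ 0) (hr : 0 < r)
    (hε : ε ≤ 1 / 2) (hsum : ∀ z ∈ closedBall c r, ∑ p ∈ s, ‖a p / (p : ℂ) ^ z‖ ≤ ε) :
    ‖iteratedDeriv n (eulerProduct s a) c‖ ≤ n ! * (2 * ε) / r ^ n :=
  norm_iteratedDeriv_le_of_forall_mem_sphere_norm_sub_le hn hr
    (differentiable_eulerProduct hs).differentiableOn
    fun z hz => norm_eulerProduct_sub_one_le hε (hsum z (sphere_subset_closedBall hz))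

theorem norm_iteratedDeriv_inv_eulerProduct_le (hs : ∀ p ∈ s, p ≠ 0) (hn : n ≠ 0) (hr : 0 < r)
    (hε : ε ≤ 1 / 4) (hsum : ∀ z ∈ closedBall c r, ∑ p ∈ s, ‖a p / (p : ℂ) ^ z‖ ≤ ε) :
    ‖iteratedDeriv n (fun z => (eulerProduct s a z)⁻¹) c‖ ≤ n ! * (4 * ε) / r ^ n := by
  have hnear : ∀ z ∈ closedBall c r, ‖eulerProduct s a z - 1‖ ≤ 1 / 2 := fun z hz =>
    (norm_eulerProduct_sub_one_le (by linarith) (hsum z hz)).trans (by linarith)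
  have hne : ∀ z ∈ closedBall c r, eulerProduct s a z ≠ 0 := by
    intro z hz h0
    have := hnear z hz
    rw [h0, zero_sub, norm_neg, norm_one] at this
    norm_num at this
  refine norm_iteratedDeriv_le_of_forall_mem_sphere_norm_sub_le (w := 1) hn hr
    ((differentiable_eulerProduct hs).differentiableOn.inv hne) fun z hz => ?_
  have hz' := sphere_subset_closedBall hz
  calc ‖(eulerProduct s a z)⁻¹ - 1‖ ≤ 2 * ‖eulerProduct s a z - 1‖ :=
        norm_inv_sub_one_le_two_mul (hnear z hz')
    _ ≤ 2 * (2 * ε) := by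
      gcongr; exact norm_eulerProduct_sub_one_le (by linarith) (hsum z hz')
    _ = 4 * ε := by ring

end EulerProduct

theorem exists_forall_norm_iteratedDeriv_eulerProduct_le {K D b : ℝ} (hK : 0 ≤ K) (hD : 0 ≤ D)
    (hb : 0 ≤ b) {n : ℕ} (hn : n ≠ 0) :
    ∃ C₀ : ℝ, ∀ C ≥ C₀, ∀ (s : Finset ℕ) (a : ℕ → ℂ), (∀ p ∈ s, C < p ∧ ‖a p‖ ≤ K) →
      ∑ p ∈ s, Real.log p ^ b / (p : ℝ) ^ ((3 : ℝ) / 4) ≤ D →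
      max ‖iteratedDeriv n (fun z => (eulerProduct s a z)⁻¹) 1‖
          ‖iteratedDeriv n (eulerProduct s fun p => (‖a p‖ : ℂ)) 1‖
        ≤ n ! * 20 ^ n * (4 * (K * D)) * C ^ (-(1 : ℝ) / 5) := by
  obtain ⟨C₀, hC₀⟩ : ∃ C₀ : ℝ, ∀ C ≥ C₀, K * D * C ^ (-(1 / 5 : ℝ)) < 1 / 4 ∧ 2 ≤ C := by
    have hlim := (tendsto_rpow_neg_atTop (by norm_num : (0 : ℝ) < 1 / 5)).const_mul (K * D)
    rw [mul_zero] at hlim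
    exact Filter.eventually_atTop.1
      ((hlim.eventually_lt_const (by norm_num)).and (Filter.eventually_ge_atTop 2))
  refine ⟨C₀, fun C hC s a hs hsum => ?_⟩
  obtain ⟨hε, hC2⟩ := hC₀ C hC
  have hs0 : ∀ p ∈ s, p ≠ 0 := fun p hp h0 => by
    have := (hs p hp).1
    rw [h0, Nat.cast_zero] at this
    linarith
  have hdisc : ∀ a' : ℕ → ℂ, (∀ p ∈ s, ‖a' p‖ ≤ K) → ∀ z ∈ closedBall (1 : ℂ) (1 / 20),
      ∑ p ∈ s, ‖a' p / (p : ℂ) ^ z‖ ≤ K * D * C ^ (-(1 / 5 : ℝ)) := fun a' ha' z hz =>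
    sum_norm_div_cpow_le hK hC2 (fun p hp => ⟨(hs p hp).1, ha' p hp⟩) hb hsum (by norm_num)
      (by linarith [sub_le_re_of_mem_closedBall hz, Complex.one_re])
  have hrate : n ! * (4 * (K * D * C ^ (-(1 / 5 : ℝ)))) / (1 / 20) ^ n
      = n ! * 20 ^ n * (4 * (K * D)) * C ^ (-(1 : ℝ) / 5) := by
    simp only [neg_div, one_div, inv_pow, div_inv_eq_mul]
    ring
  rw [← hrate]
  refine max_le (norm_iteratedDeriv_inv_eulerProduct_le hs0 hn (by norm_num) hε.le
    (hdisc a fun p hp => (hs p hp).2)) ((norm_iteratedDeriv_eulerProduct_le hs0 hn (by norm_num)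
    (by linarith) (hdisc _ fun p hp => by simpa using (hs p hp).2)).trans ?_)
  have : 0 ≤ K * D * C ^ (-(1 / 5 : ℝ)) :=
    mul_nonneg (mul_nonneg hK hD) (Real.rpow_nonneg (by linarith) _)
  gcongr
  linarith

/-- Bounds for the derivatives at `z = 1` of `H_q(z)⁻¹ = ∏_{p ∣ q}(1 + g(p)/p^z)⁻¹` and of
`G̃_q(z) = ∏_{p ∣ q}(1 + |g(p)|/p^z)`: all `h`-th derivatives (`h ≥ 1`) are `≤ C' C^{−1/5}`,
and the values at `z = 1` are bounded above and below by constants depending on `κ, D`. -/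
theorem euler_product_derivative_bounds (κ A₁ D : ℝ)
    (hκ : 1 < κ) (hA₁pos : 0 < A₁) (hD : 0 < D) :
    (∀ h : ℕ, 1 ≤ h →
      ∃ C₀ C' : ℝ, 0 < C' ∧ ∀ C : ℝ, C₀ ≤ C → κ + 1 < C →
        ∀ (N : ℕ) (g : ℕ → ℂ) (q : ℕ),
          g 1 = 1 →
          (∀ m n : ℕ, Nat.Coprime m n → g (m * n) = g m * g n) →
          (∀ n : ℕ, ¬Squarefree n → g n = 0) →
          (∀ n : ℕ, 0 < n → (∀ p : ℕ, p.Prime → p ∣ n → p ≤ N) →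
            ‖g n‖ ≤ dR (κ + 1) n) →
          (∀ p : ℕ, p.Prime → (p : ℝ) ≤ C → g p = 0) →
          Squarefree q → q < N →
          (∀ p : ℕ, p.Prime → p ∣ q → C < (p : ℝ)) →
          (∑ p ∈ q.primeFactors, Real.log p ^ (A₁ + 1) / (p : ℝ) ^ ((3 : ℝ) / 4)) ≤ D →
          max
              (‖iteratedDeriv h
                (fun z : ℂ => (∏ p ∈ q.primeFactors, (1 + g p / (p : ℂ) ^ z))⁻¹) 1‖)
              (‖iteratedDeriv h
                (fun z : ℂ => ∏ p ∈ q.primeFactors,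
                  (1 + (‖g p‖ : ℂ) / (p : ℂ) ^ z)) 1‖)
            ≤ C' * C ^ (-(1 : ℝ) / 5)) ∧
    (∃ c₁ c₂ : ℝ, 0 < c₁ ∧ 0 < c₂ ∧ ∀ C : ℝ, κ + 1 < C →
      ∀ (N : ℕ) (g : ℕ → ℂ) (q : ℕ),
        g 1 = 1 →
        (∀ m n : ℕ, Nat.Coprime m n → g (m * n) = g m * g n) →
        (∀ n : ℕ, ¬Squarefree n → g n = 0) →
        (∀ n : ℕ, 0 < n → (∀ p : ℕ, p.Prime → p ∣ n → p ≤ N) →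
          ‖g n‖ ≤ dR (κ + 1) n) →
        (∀ p : ℕ, p.Prime → (p : ℝ) ≤ C → g p = 0) →
        Squarefree q → q < N →
        (∀ p : ℕ, p.Prime → p ∣ q → C < (p : ℝ)) →
        (∑ p ∈ q.primeFactors, Real.log p ^ (A₁ + 1) / (p : ℝ) ^ ((3 : ℝ) / 4)) ≤ D →
        (c₁ ≤ ‖(∏ p ∈ q.primeFactors, (1 + g p / (p : ℂ)))⁻¹‖ ∧
          ‖(∏ p ∈ q.primeFactors, (1 + g p / (p : ℂ)))⁻¹‖ ≤ c₂ ∧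
          c₁ ≤ ∏ p ∈ q.primeFactors, (1 + ‖g p‖ / (p : ℝ)) ∧
          (∏ p ∈ q.primeFactors, (1 + ‖g p‖ / (p : ℝ))) ≤ c₂)) := by
  have hK : 2 ≤ κ + 1 := by linarith
  have hb : 0 ≤ A₁ + 1 := by linarith
  refine ⟨fun h hh => ?_, ?_⟩
  · obtain ⟨C₀, hC₀⟩ :=
      exists_forall_norm_iteratedDeriv_eulerProduct_le (K := κ + 1) (by linarith) hD.le hb
        (n := h) (by omega)
    exact ⟨C₀, _, mul_pos (by positivity) (mul_pos four_pos (mul_pos (by linarith) hD)),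
      fun C hC _ N g q _ _ _ hg _ _ hqN hqC hsum =>
        hC₀ C hC _ g (forall_mem_primeFactors_lt_and_norm_le hg hqN.le hqC) hsum⟩
  · obtain ⟨c, hc, hbounds⟩ := exists_bounds_prod_one_add_div hK hD.le hb
    exact ⟨c, c⁻¹, hc, inv_pos.2 hc, fun C hκC N g q _ _ _ hg _ _ hqN hqC hsum =>
      hbounds _ g (fun p hp => (forall_mem_primeFactors_lt_and_norm_le hg hqN.le hqC p hp).imp_left
        hκC.trans) hsum⟩
end

section
/- Let κ > 1, A₁ > 0, D > 0. Then for every positive integer q with Σ_{p | q} (log p)^{A₁+1}/p^{3/4} ≤ D (sum over primes dividing q): Σ_{b ≥ 1, every prime factor of b divides q} d_κ(b)·gcd(q,b)/b^{3/4} ≤ C q^{1/4} d_{κ+1}(q) and Σ_{b ≥ 1, every prime factor of b divides q} d_κ(b)·gcd(q,b)/b ≤ C d_{κ+1}(q), where C depends only on κ, A₁ and D. -/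
open Finset
open scoped Classical

/-!
Both sums are Euler products over the primes `p ∣ q` of the local factors
`∑ₙ d_κ(pⁿ) (q, pⁿ) p^{-ns}`, `s ∈ [3/4, 1]`. With `v = v_p(q)`, the terms `n ≤ v` contribute at
most `p^{v(1-s)} ∑_{n ≤ v} d_κ(pⁿ) = p^{v(1-s)} d_{κ+1}(p^v)`. Since `d_κ(p^{v+m}) ≤ d_κ(p^v) d_κ(p^m)`
for `κ ≥ 1`, the terms `n > v` contribute at most `p^{v(1-s)} d_κ(p^v) · p^{-3/4} S` with
`S = ∑ⱼ d_κ(p^{j+1}) 2^{-3j/4}`. So the sum is at most `q^{1-s} d_{κ+1}(q) exp(S ∑_{p ∣ q} p^{-3/4})`,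
and the hypothesis bounds `∑_{p ∣ q} p^{-3/4}` by `D / (log 2)^{A₁+1}`.
-/

open Real Filter Topology

/-- `d_κ(p^k)`, the coefficient of `x^k` in `(1 - x)^{-κ}`. -/
noncomputable def dCoeff (κ : ℝ) (k : ℕ) : ℝ :=
  (∏ i ∈ range k, (κ + (i : ℝ))) / (Nat.factorial k : ℝ)

section dCoeff

variable {κ : ℝ}

@[simp]
lemma dCoeff_zero (κ : ℝ) : dCoeff κ 0 = 1 := by simp [dCoeff]

lemma dCoeff_succ (κ : ℝ) (k : ℕ) : dCoeff κ (k + 1) = dCoeff κ k * ((κ + k) / (k + 1)) := by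
  simp only [dCoeff, prod_range_succ, Nat.factorial_succ, Nat.cast_mul, Nat.cast_add,
    Nat.cast_one, div_mul_div_comm]
  ring

lemma dCoeff_nonneg (hκ : 0 ≤ κ) (k : ℕ) : 0 ≤ dCoeff κ k := by
  unfold dCoeff; positivity

lemma dCoeff_le_dCoeff {κ' : ℝ} (hκ : 0 ≤ κ) (h : κ ≤ κ') (k : ℕ) : dCoeff κ k ≤ dCoeff κ' k := by
  unfold dCoeff
  gcongr

lemma dCoeff_add_one_mul (κ : ℝ) (k : ℕ) : dCoeff (κ + 1) k * κ = dCoeff κ k * (κ + k) := by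
  have h := prod_range_succ' (fun i : ℕ => κ + (i : ℝ)) k
  rw [prod_range_succ] at h
  simp only [dCoeff, Nat.cast_add, Nat.cast_one, Nat.cast_zero, add_zero] at h ⊢
  rw [div_mul_eq_mul_div, div_mul_eq_mul_div, h]
  congr 2
  exact prod_congr rfl fun i _ => by ring

lemma dCoeff_add_one_succ (κ : ℝ) (k : ℕ) :
    dCoeff (κ + 1) (k + 1) = dCoeff (κ + 1) k + dCoeff κ (k + 1) := by
  rw [dCoeff_succ, dCoeff_succ]
  field_simp
  linear_combination dCoeff_add_one_mul κ k

lemma sum_range_dCoeff (κ : ℝ) (v : ℕ) :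
    ∑ k ∈ range (v + 1), dCoeff κ k = dCoeff (κ + 1) v := by
  induction v with
  | zero => simp
  | succ v ih => rw [sum_range_succ, ih, dCoeff_add_one_succ]

lemma dCoeff_add_le_mul (hκ : 1 ≤ κ) (m n : ℕ) : dCoeff κ (m + n) ≤ dCoeff κ m * dCoeff κ n := by
  induction n with
  | zero => simp
  | succ n ih =>
    have hratio : (κ + (m + n : ℕ)) / ((m + n : ℕ) + 1) ≤ (κ + n) / (n + 1) := by
      rw [div_le_div_iff₀ (by positivity) (by positivity)]
      push_cast
      nlinarith [(Nat.cast_nonneg m : (0 : ℝ) ≤ m), (Nat.cast_nonneg n : (0 : ℝ) ≤ n)]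
    rw [← add_assoc, dCoeff_succ, dCoeff_succ, ← mul_assoc]
    exact mul_le_mul ih hratio (by positivity)
      (mul_nonneg (dCoeff_nonneg (by linarith) _) (dCoeff_nonneg (by linarith) _))

lemma summable_dCoeff_mul_pow (κ : ℝ) {x : ℝ} (hx : |x| < 1) :
    Summable fun n => dCoeff κ n * x ^ n := by
  obtain ⟨r, hxr, hr⟩ := exists_between hx
  have hlim : Tendsto (fun n : ℕ => (κ + 1 * n) / (1 + 1 * n) * |x|) atTop (𝓝 (1 / 1 * |x|)) :=
    (tendsto_add_mul_div_add_mul_atTop_nhds κ 1 1 one_ne_zero).mul_const _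
  rw [div_one, one_mul] at hlim
  refine summable_of_ratio_norm_eventually_le hr ?_
  filter_upwards [hlim.eventually_le_const hxr, eventually_ge_atTop ⌈-κ⌉₊] with n hn hκn
  have hκn : 0 ≤ κ + n := by linarith [Nat.ceil_le.1 hκn]
  rw [dCoeff_succ, pow_succ, norm_mul, norm_mul, norm_mul, norm_mul, norm_pow, Real.norm_eq_abs,
    Real.norm_eq_abs, abs_of_nonneg (div_nonneg hκn (by positivity))]
  simp only [one_mul] at hn
  rw [add_comm (1 : ℝ)] at hn
  calc |dCoeff κ n| * ((κ + n) / (n + 1)) * (|x| ^ n * |x|)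
      = (κ + n) / (n + 1) * |x| * (|dCoeff κ n| * |x| ^ n) := by ring
    _ ≤ r * (|dCoeff κ n| * |x| ^ n) := by gcongr

lemma summable_dCoeff_succ_mul_pow (κ : ℝ) {x : ℝ} (hx : |x| < 1) :
    Summable fun j => dCoeff κ (j + 1) * x ^ j := by
  rcases eq_or_ne x 0 with rfl | hx0
  · exact (summable_nat_add_iff 1).1 (by simp)
  · refine ((summable_nat_add_iff 1).2 (summable_dCoeff_mul_pow κ hx)).mul_left x⁻¹ |>.congr
      fun j => ?_
    field_simp
    ring

end dCoeff

noncomputable def dTail (κ x : ℝ) : ℝ := ∑' j : ℕ, dCoeff κ (j + 1) * x ^ j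

lemma dTail_nonneg {κ x : ℝ} (hκ : 0 ≤ κ) (hx : 0 ≤ x) : 0 ≤ dTail κ x :=
  tsum_nonneg fun _ => mul_nonneg (dCoeff_nonneg hκ _) (pow_nonneg hx _)

section LocalFactor

variable {κ u y x : ℝ}

lemma sum_range_dCoeff_mul_pow_le (hκ : 0 ≤ κ) {w : ℝ} (hw : 1 ≤ w) (v : ℕ) :
    ∑ n ∈ range (v + 1), dCoeff κ n * w ^ n ≤ dCoeff (κ + 1) v * w ^ v := by
  calc ∑ n ∈ range (v + 1), dCoeff κ n * w ^ n
      ≤ ∑ n ∈ range (v + 1), dCoeff κ n * w ^ v := by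
        gcongr with n hn
        · exact dCoeff_nonneg hκ n
        · exact Nat.lt_succ_iff.1 (mem_range.1 hn)
    _ = dCoeff (κ + 1) v * w ^ v := by rw [← sum_mul, sum_range_dCoeff]

lemma tsum_dCoeff_mul_pow_add_le (hκ : 1 ≤ κ) (hu : 0 ≤ u) (huy : u ≤ y) (hux : u ≤ x)
    (hx : x < 1) (v : ℕ) :
    ∑' j, dCoeff κ (j + (v + 1)) * u ^ (j + (v + 1)) ≤ dCoeff κ v * u ^ v * y * dTail κ x := by
  have hκ0 : 0 ≤ κ := by linarith
  have hy : 0 ≤ y := hu.trans huy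
  have hterm (j : ℕ) : dCoeff κ (j + (v + 1)) * u ^ (j + (v + 1))
      ≤ dCoeff κ v * u ^ v * y * (dCoeff κ (j + 1) * x ^ j) := by
    have hpow : u ^ (j + (v + 1)) ≤ u ^ v * (y * x ^ j) := by
      rw [show j + (v + 1) = v + (1 + j) by omega, pow_add, pow_add, pow_one]
      gcongr
    rw [show j + (v + 1) = v + (j + 1) by omega] at hpow ⊢
    calc dCoeff κ (v + (j + 1)) * u ^ (v + (j + 1))
        ≤ (dCoeff κ v * dCoeff κ (j + 1)) * (u ^ v * (y * x ^ j)) := by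
          gcongr
          · exact mul_nonneg (dCoeff_nonneg hκ0 _) (dCoeff_nonneg hκ0 _)
          · exact dCoeff_add_le_mul hκ v (j + 1)
      _ = dCoeff κ v * u ^ v * y * (dCoeff κ (j + 1) * x ^ j) := by ring
  have hx' : |x| < 1 := abs_lt.2 ⟨by linarith, hx⟩
  have hu' : |u| < 1 := by rw [abs_of_nonneg hu]; linarith
  calc ∑' j, dCoeff κ (j + (v + 1)) * u ^ (j + (v + 1))
      ≤ ∑' j, dCoeff κ v * u ^ v * y * (dCoeff κ (j + 1) * x ^ j) :=
        Summable.tsum_le_tsum hterm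
          ((summable_nat_add_iff (f := fun n => dCoeff κ n * u ^ n) (v + 1)).2
            (summable_dCoeff_mul_pow κ hu'))
          ((summable_dCoeff_succ_mul_pow κ hx').mul_left _)
    _ = dCoeff κ v * u ^ v * y * dTail κ x := tsum_mul_left

lemma tsum_dCoeff_mul_pow_min_le {P : ℝ} (hκ : 1 ≤ κ) (hu : 0 ≤ u) (huy : u ≤ y) (hux : u ≤ x)
    (hx : x < 1) (hPu : 1 ≤ P * u) (v : ℕ) :
    Summable (fun n => dCoeff κ n * P ^ min n v * u ^ n) ∧
    ∑' n, dCoeff κ n * P ^ min n v * u ^ n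
      ≤ (P * u) ^ v * dCoeff (κ + 1) v * (1 + y * dTail κ x) := by
  have hκ0 : 0 ≤ κ := by linarith
  have hu' : |u| < 1 := by rw [abs_of_nonneg hu]; linarith
  have htail (j : ℕ) : dCoeff κ (j + (v + 1)) * P ^ min (j + (v + 1)) v * u ^ (j + (v + 1))
      = P ^ v * (dCoeff κ (j + (v + 1)) * u ^ (j + (v + 1))) := by
    rw [min_eq_right (by omega)]; ring
  have hsum : Summable (fun n => dCoeff κ n * P ^ min n v * u ^ n) := by
    rw [← summable_nat_add_iff (v + 1)]
    simp only [htail]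
    exact ((summable_nat_add_iff (v + 1)).2 (summable_dCoeff_mul_pow κ hu')).mul_left _
  refine ⟨hsum, ?_⟩
  have hhead : ∑ n ∈ range (v + 1), dCoeff κ n * P ^ min n v * u ^ n
      = ∑ n ∈ range (v + 1), dCoeff κ n * (P * u) ^ n := by
    refine sum_congr rfl fun n hn => ?_
    rw [min_eq_left (Nat.lt_succ_iff.1 (mem_range.1 hn)), mul_pow, mul_assoc]
  have hPu0 : 0 ≤ (P * u) ^ v := by positivity
  have hy : 0 ≤ y * dTail κ x := mul_nonneg (hu.trans huy) (dTail_nonneg hκ0 (hu.trans hux))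
  rw [← hsum.sum_add_tsum_nat_add (v + 1), hhead]
  simp only [htail]
  rw [tsum_mul_left]
  calc ∑ n ∈ range (v + 1), dCoeff κ n * (P * u) ^ n
        + P ^ v * ∑' j, dCoeff κ (j + (v + 1)) * u ^ (j + (v + 1))
      ≤ dCoeff (κ + 1) v * (P * u) ^ v + P ^ v * (dCoeff κ v * u ^ v * y * dTail κ x) := by
        gcongr
        · exact sum_range_dCoeff_mul_pow_le hκ0 hPu v
        · have hP : 0 < P := pos_of_mul_pos_left (one_pos.trans_le hPu) hu
          positivity
        · exact tsum_dCoeff_mul_pow_add_le hκ hu huy hux hx v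
    _ = (P * u) ^ v * (dCoeff (κ + 1) v + dCoeff κ v * (y * dTail κ x)) := by ring
    _ ≤ (P * u) ^ v * dCoeff (κ + 1) v * (1 + y * dTail κ x) := by
        have := dCoeff_le_dCoeff hκ0 (le_add_of_nonneg_right zero_le_one) v
        nlinarith [mul_le_mul_of_nonneg_left this (mul_nonneg hPu0 hy)]

end LocalFactor

lemma dR_prime_pow (κ : ℝ) {p : ℕ} (hp : p.Prime) (k : ℕ) : dR κ (p ^ k) = dCoeff κ k := by
  rw [dR, hp.factorization_pow, Finsupp.prod_single_index (by simp), dCoeff]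

lemma dR_eq_prod_primeFactors (κ : ℝ) (n : ℕ) :
    dR κ n = ∏ p ∈ n.primeFactors, dCoeff κ (n.factorization p) := by
  rw [dR, Finsupp.prod, Nat.support_factorization]
  rfl

lemma dR_nonneg {κ : ℝ} (hκ : 0 ≤ κ) (n : ℕ) : 0 ≤ dR κ n := by
  rw [dR_eq_prod_primeFactors]
  exact prod_nonneg fun p _ => dCoeff_nonneg hκ _

lemma dR_mul_of_coprime (κ : ℝ) {m n : ℕ} (h : m.Coprime n) :
    dR κ (m * n) = dR κ m * dR κ n := by
  rcases eq_or_ne m 0 with rfl | hm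
  · obtain rfl : n = 1 := by simpa using h
    simp [dR]
  rcases eq_or_ne n 0 with rfl | hn
  · obtain rfl : m = 1 := by simpa using h
    simp [dR]
  rw [dR, Nat.factorization_mul hm hn, Finsupp.prod_add_index_of_disjoint]
  · rfl
  · rw [Nat.support_factorization, Nat.support_factorization]
    exact h.disjoint_primeFactors

noncomputable def gcdTerm (κ s : ℝ) (q b : ℕ) : ℝ := dR κ b * (Nat.gcd q b : ℝ) / (b : ℝ) ^ s

section GcdTerm

variable {κ s : ℝ} {q : ℕ}

lemma gcdTerm_nonneg (hκ : 0 ≤ κ) (b : ℕ) : 0 ≤ gcdTerm κ s q b := by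
  unfold gcdTerm
  have := dR_nonneg hκ b
  positivity

lemma gcdTerm_one : gcdTerm κ s q 1 = 1 := by simp [gcdTerm, dR]

lemma gcdTerm_mul_of_coprime {m n : ℕ} (h : m.Coprime n) :
    gcdTerm κ s q (m * n) = gcdTerm κ s q m * gcdTerm κ s q n := by
  simp only [gcdTerm, dR_mul_of_coprime κ h, Nat.Coprime.gcd_mul q h, Nat.cast_mul,
    Real.mul_rpow (Nat.cast_nonneg m) (Nat.cast_nonneg n)]
  ring

lemma gcd_prime_pow_le (hq : q ≠ 0) {p : ℕ} (hp : p.Prime) (n : ℕ) :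
    Nat.gcd q (p ^ n) ≤ p ^ min n (q.factorization p) := by
  obtain ⟨m, hmn, hm⟩ := (Nat.dvd_prime_pow hp).1 (Nat.gcd_dvd_right q (p ^ n))
  have hmq : m ≤ q.factorization p :=
    (hp.pow_dvd_iff_le_factorization hq).1 (hm ▸ Nat.gcd_dvd_left q (p ^ n))
  rw [hm]
  exact Nat.pow_le_pow_right hp.pos (le_min hmn hmq)

lemma gcdTerm_prime_pow_le (hκ : 0 ≤ κ) (hq : q ≠ 0) {p : ℕ} (hp : p.Prime) (n : ℕ) :
    gcdTerm κ s q (p ^ n)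
      ≤ dCoeff κ n * (p : ℝ) ^ min n (q.factorization p) * ((p : ℝ) ^ (-s)) ^ n := by
  have hp0 : (0 : ℝ) ≤ p := Nat.cast_nonneg p
  rw [gcdTerm, dR_prime_pow κ hp, Real.rpow_pow_comm hp0, Real.rpow_neg (by positivity),
    ← div_eq_mul_inv, Nat.cast_pow]
  gcongr
  · exact dCoeff_nonneg hκ n
  · exact_mod_cast gcd_prime_pow_le hq hp n

end GcdTerm

lemma tsum_gcdTerm_prime_pow_le {κ s : ℝ} {q p : ℕ} (hκ : 1 ≤ κ) (hs : 3 / 4 ≤ s) (hs1 : s ≤ 1)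
    (hq : q ≠ 0) (hp : p.Prime) :
    Summable (fun n => gcdTerm κ s q (p ^ n)) ∧
    ∑' n, gcdTerm κ s q (p ^ n)
      ≤ ((p : ℝ) ^ q.factorization p) ^ (1 - s) * dCoeff (κ + 1) (q.factorization p)
        * (1 + (p : ℝ) ^ (-(3 / 4) : ℝ) * dTail κ (2 ^ (-(3 / 4) : ℝ))) := by
  have hp1 : (1 : ℝ) ≤ p := by exact_mod_cast hp.one_lt.le
  have hp0 : (0 : ℝ) < p := by linarith
  have huy : (p : ℝ) ^ (-s) ≤ (p : ℝ) ^ (-(3 / 4) : ℝ) :=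
    Real.rpow_le_rpow_of_exponent_le hp1 (by linarith)
  have hux : (p : ℝ) ^ (-s) ≤ 2 ^ (-(3 / 4) : ℝ) :=
    huy.trans (Real.rpow_le_rpow_of_nonpos two_pos (by exact_mod_cast hp.two_le) (by norm_num))
  have hx : (2 : ℝ) ^ (-(3 / 4) : ℝ) < 1 :=
    Real.rpow_lt_one_of_one_lt_of_neg one_lt_two (by norm_num)
  have hPu : (p : ℝ) * (p : ℝ) ^ (-s) = (p : ℝ) ^ (1 - s) := by
    rw [sub_eq_add_neg, Real.rpow_add hp0, Real.rpow_one]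
  obtain ⟨hsum, hle⟩ := tsum_dCoeff_mul_pow_min_le hκ (by positivity) huy hux hx
    (hPu ▸ Real.one_le_rpow hp1 (by linarith)) (q.factorization p)
  have hκ0 : 0 ≤ κ := by linarith
  have hsum' : Summable (fun n => gcdTerm κ s q (p ^ n)) :=
    hsum.of_nonneg_of_le (fun n => gcdTerm_nonneg hκ0 _) (gcdTerm_prime_pow_le hκ0 hq hp)
  refine ⟨hsum', (hsum'.tsum_le_tsum (gcdTerm_prime_pow_le hκ0 hq hp) hsum).trans ?_⟩
  rwa [hPu, Real.rpow_pow_comm hp0.le] at hle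

lemma tsum_factoredNumbers_gcdTerm_le {κ s : ℝ} {q : ℕ} (hκ : 1 ≤ κ) (hs : 3 / 4 ≤ s)
    (hs1 : s ≤ 1) (hq : q ≠ 0) :
    Summable (fun m : Nat.factoredNumbers q.primeFactors => gcdTerm κ s q m) ∧
    ∑' m : Nat.factoredNumbers q.primeFactors, gcdTerm κ s q m
      ≤ (q : ℝ) ^ (1 - s) * dR (κ + 1) q
        * exp (dTail κ (2 ^ (-(3 / 4) : ℝ)) * ∑ p ∈ q.primeFactors, (p : ℝ) ^ (-(3 / 4) : ℝ)) := by
  have hκ0 : 0 ≤ κ := by linarith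
  have hlocal {p : ℕ} (hp : p.Prime) := tsum_gcdTerm_prime_pow_le hκ hs hs1 hq hp
  obtain ⟨hsum, hprod⟩ := EulerProduct.summable_and_hasSum_factoredNumbers_prod_filter_prime_tsum
    (f := gcdTerm κ s q) gcdTerm_one gcdTerm_mul_of_coprime
    (fun hp => (hlocal hp).1.norm.congr fun n => by simp) q.primeFactors
  rw [filter_true_of_mem fun p hp => Nat.prime_of_mem_primeFactors hp] at hprod
  refine ⟨hsum.of_norm, hprod.tsum_eq ▸ ?_⟩
  have hq_eq : (q : ℝ) ^ (1 - s)
      = ∏ p ∈ q.primeFactors, ((p : ℝ) ^ q.factorization p) ^ (1 - s) := by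
    rw [Real.finsetProd_rpow _ _ fun p _ => by positivity]
    congr 1
    exact_mod_cast Nat.prod_primeFactors_pow_factorization hq
  have hTail : 0 ≤ dTail κ (2 ^ (-(3 / 4) : ℝ)) := dTail_nonneg hκ0 (by positivity)
  calc ∏ p ∈ q.primeFactors, ∑' n, gcdTerm κ s q (p ^ n)
      ≤ ∏ p ∈ q.primeFactors, (((p : ℝ) ^ q.factorization p) ^ (1 - s)
          * dCoeff (κ + 1) (q.factorization p)
          * (1 + (p : ℝ) ^ (-(3 / 4) : ℝ) * dTail κ (2 ^ (-(3 / 4) : ℝ)))) :=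
        prod_le_prod (fun p _ => tsum_nonneg fun n => gcdTerm_nonneg hκ0 _)
          fun p hp => (hlocal (Nat.prime_of_mem_primeFactors hp)).2
    _ = (q : ℝ) ^ (1 - s) * dR (κ + 1) q
          * ∏ p ∈ q.primeFactors, (1 + (p : ℝ) ^ (-(3 / 4) : ℝ) * dTail κ (2 ^ (-(3 / 4) : ℝ))) := by
        rw [prod_mul_distrib, prod_mul_distrib, hq_eq, dR_eq_prod_primeFactors]
    _ ≤ (q : ℝ) ^ (1 - s) * dR (κ + 1) q
          * exp (dTail κ (2 ^ (-(3 / 4) : ℝ)) * ∑ p ∈ q.primeFactors, (p : ℝ) ^ (-(3 / 4) : ℝ)) := by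
        have := dR_nonneg (by linarith : (0 : ℝ) ≤ κ + 1) q
        gcongr
        rw [mul_sum]
        simp_rw [mul_comm (dTail κ _)]
        exact Real.prod_one_add_le_exp_sum _ fun p => by positivity

lemma mem_factoredNumbers_primeFactors_iff {q b : ℕ} (hq : q ≠ 0) :
    b ∈ Nat.factoredNumbers q.primeFactors ↔ 1 ≤ b ∧ ∀ p : ℕ, p.Prime → p ∣ b → p ∣ q := by
  constructor
  · intro h
    exact ⟨Nat.one_le_iff_ne_zero.2 h.1, fun p hp hpb =>
      Nat.dvd_of_mem_primeFactors (Nat.mem_factoredNumbers'.1 h p hp hpb)⟩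
  · rintro ⟨-, h⟩
    exact Nat.mem_factoredNumbers'.2 fun p hp hpb => Nat.mem_primeFactors.2 ⟨hp, h p hp hpb, hq⟩

lemma tsum_ite_ofReal_gcdTerm_le {κ s T : ℝ} {q : ℕ} (hκ : 1 ≤ κ) (hs : 3 / 4 ≤ s)
    (hs1 : s ≤ 1) (hq : q ≠ 0) (hT : ∑ p ∈ q.primeFactors, (p : ℝ) ^ (-(3 / 4) : ℝ) ≤ T) :
    (∑' b : ℕ, if 1 ≤ b ∧ ∀ p : ℕ, p.Prime → p ∣ b → p ∣ q then
        ENNReal.ofReal (gcdTerm κ s q b) else 0)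
      ≤ ENNReal.ofReal (exp (dTail κ (2 ^ (-(3 / 4) : ℝ)) * T) * (q : ℝ) ^ (1 - s)
          * dR (κ + 1) q) := by
  obtain ⟨hsum, hle⟩ := tsum_factoredNumbers_gcdTerm_le hκ hs hs1 hq
  have hκ0 : 0 ≤ κ := by linarith
  calc (∑' b : ℕ, if 1 ≤ b ∧ ∀ p : ℕ, p.Prime → p ∣ b → p ∣ q then
          ENNReal.ofReal (gcdTerm κ s q b) else 0)
      = ∑' m : Nat.factoredNumbers q.primeFactors, ENNReal.ofReal (gcdTerm κ s q m) := by
        rw [_root_.tsum_subtype _ fun b => ENNReal.ofReal (gcdTerm κ s q b)]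
        exact tsum_congr fun b => by
          simp only [Set.indicator_apply, mem_factoredNumbers_primeFactors_iff hq]
    _ = ENNReal.ofReal (∑' m : Nat.factoredNumbers q.primeFactors, gcdTerm κ s q m) :=
        (ENNReal.ofReal_tsum_of_nonneg (fun m => gcdTerm_nonneg hκ0 _) hsum).symm
    _ ≤ _ := by
        refine ENNReal.ofReal_le_ofReal (hle.trans ?_)
        have := dR_nonneg (by linarith : (0 : ℝ) ≤ κ + 1) q
        have := dTail_nonneg hκ0 (by positivity : (0 : ℝ) ≤ 2 ^ (-(3 / 4) : ℝ))
        calc _ ≤ (q : ℝ) ^ (1 - s) * dR (κ + 1) q * exp (dTail κ (2 ^ (-(3 / 4) : ℝ)) * T) := by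
              gcongr
          _ = _ := by ring

lemma sum_primeFactors_rpow_neg_le {q : ℕ} {a σ D : ℝ} (ha : 0 ≤ a)
    (h : ∑ p ∈ q.primeFactors, Real.log p ^ a / (p : ℝ) ^ σ ≤ D) :
    ∑ p ∈ q.primeFactors, (p : ℝ) ^ (-σ) ≤ D / Real.log 2 ^ a := by
  have hlog2 : 0 < Real.log 2 ^ a := Real.rpow_pos_of_pos (Real.log_pos one_lt_two) a
  rw [le_div_iff₀ hlog2, sum_mul]
  refine le_trans (sum_le_sum fun p hp => ?_) h
  have hp2 : (2 : ℝ) ≤ p := by exact_mod_cast (Nat.prime_of_mem_primeFactors hp).two_le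
  rw [Real.rpow_neg (by positivity), inv_mul_eq_div]
  gcongr

theorem smooth_tail_sums_bounded_general (κ A₁ D : ℝ) (hκ : 1 < κ) (hA₁pos : 0 < A₁) :
    ∃ C : ℝ, 0 < C ∧ ∀ q : ℕ, 0 < q →
      (∑ p ∈ q.primeFactors, Real.log p ^ (A₁ + 1) / (p : ℝ) ^ ((3 : ℝ) / 4)) ≤ D →
      (∑' b : ℕ, if 1 ≤ b ∧ ∀ p : ℕ, p.Prime → p ∣ b → p ∣ q then
            ENNReal.ofReal (dR κ b * (Nat.gcd q b : ℝ) / (b : ℝ) ^ ((3 : ℝ) / 4)) else 0)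
          ≤ ENNReal.ofReal (C * (q : ℝ) ^ ((1 : ℝ) / 4) * dR (κ + 1) q) ∧
      (∑' b : ℕ, if 1 ≤ b ∧ ∀ p : ℕ, p.Prime → p ∣ b → p ∣ q then
            ENNReal.ofReal (dR κ b * (Nat.gcd q b : ℝ) / (b : ℝ)) else 0)
          ≤ ENNReal.ofReal (C * dR (κ + 1) q) := by
  refine ⟨exp (dTail κ (2 ^ (-(3 / 4) : ℝ)) * (D / Real.log 2 ^ (A₁ + 1))), exp_pos _,
    fun q hq hlog => ?_⟩
  have hT := sum_primeFactors_rpow_neg_le (by linarith) hlog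
  constructor
  · have h := tsum_ite_ofReal_gcdTerm_le hκ.le le_rfl (by norm_num) hq.ne' hT
    rwa [show (1 : ℝ) - 3 / 4 = 1 / 4 by norm_num] at h
  · have h := tsum_ite_ofReal_gcdTerm_le hκ.le (by norm_num) le_rfl hq.ne' hT
    simpa only [gcdTerm, Real.rpow_one, sub_self, Real.rpow_zero, mul_one] using h

/-- Tail bounds: for `q` with `∑_{p ∣ q} (log p)^{A₁+1} p^{−3/4} ≤ D`,
`∑_{b : p ∣ b ⇒ p ∣ q} d_κ(b) (q,b) b^{−3/4} ≤ C q^{1/4} d_{κ+1}(q)` and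
`∑_{b : p ∣ b ⇒ p ∣ q} d_κ(b) (q,b) b^{−1} ≤ C d_{κ+1}(q)`. -/
theorem smooth_tail_sums_bounded (κ A₁ D : ℝ) (hκ : 1 < κ) (hA₁pos : 0 < A₁) (hD : 0 < D) :
    ∃ C : ℝ, 0 < C ∧ ∀ q : ℕ, 0 < q →
      (∑ p ∈ q.primeFactors, Real.log p ^ (A₁ + 1) / (p : ℝ) ^ ((3 : ℝ) / 4)) ≤ D →
      (∑' b : ℕ, if 1 ≤ b ∧ ∀ p : ℕ, p.Prime → p ∣ b → p ∣ q then
            ENNReal.ofReal (dR κ b * (Nat.gcd q b : ℝ) / (b : ℝ) ^ ((3 : ℝ) / 4)) else 0)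
          ≤ ENNReal.ofReal (C * (q : ℝ) ^ ((1 : ℝ) / 4) * dR (κ + 1) q) ∧
      (∑' b : ℕ, if 1 ≤ b ∧ ∀ p : ℕ, p.Prime → p ∣ b → p ∣ q then
            ENNReal.ofReal (dR κ b * (Nat.gcd q b : ℝ) / (b : ℝ)) else 0)
          ≤ ENNReal.ofReal (C * dR (κ + 1) q) :=
  smooth_tail_sums_bounded_general κ A₁ D hκ hA₁pos
end

section
/- Let κ > 1, ε > 0, N ≥ 2, let f : ℕ → ℂ be multiplicative, and let s' be a squarefree positive integer such that for every prime p | s': |f(p)| ≤ κ, f(p) ≠ 1, and moreover Σ_{p | s'} (log p)/min{|f(p) − 1|, 1} ≤ ε (log N)/κ. Then for every integer h ≥ 1: | Σ_{b | s'} f(b) μ(b) (log b)^h | ≤ ( Π_{p | s'} |1 − f(p)| ) · (ε log N)^h. -/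
/-!
Write the divisors of `s'` as `∏ p ∈ T, p` for `T ⊆ S := s'.primeFactors`; the sum becomes
`∑_T (∏_{p ∈ T} -f p) (∑_{p ∈ T} log p)^h`. Expanding the `h`-th power over tuples
`τ : Fin h → S` and summing over `T ⊇ image τ` first, the coefficient of `∏_i log τ_i` is
`∏_{p ∈ image τ} (-f p) ∏_{p ∈ S \ image τ} (1 - f p)`. With the weight
`w p = κ / min ‖f p - 1‖ 1 ≥ 1` one has `‖f p‖ ≤ κ ≤ ‖1 - f p‖ w p`, so this coefficient is at
most `∏_S ‖1 - f p‖ ∏_i w τ_i`, and resumming over `τ` gives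
`∏_S ‖1 - f p‖ (∑_S w p log p)^h ≤ ∏_S ‖1 - f p‖ (ε log N)^h`.
-/

open Finset

section PowersetSums

variable {ι R : Type*} [DecidableEq ι]

theorem sum_Icc_prod [CommSemiring R] (g : ι → R) {A S : Finset ι} (hA : A ⊆ S) :
    ∑ T ∈ Icc A S, ∏ p ∈ T, g p = (∏ p ∈ A, g p) * ∏ p ∈ S \ A, (1 + g p) := by
  rw [Finset.Icc_eq_image_powerset hA, sum_image, prod_one_add, mul_sum]
  · refine sum_congr rfl fun U hU => ?_
    rw [prod_union (disjoint_of_subset_right (mem_powerset.mp hU) disjoint_sdiff)]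
  · intro U hU V hV hUV
    have hdisj : ∀ W ∈ (S \ A).powerset, Disjoint A W := fun W hW =>
      disjoint_of_subset_right (mem_powerset.mp hW) disjoint_sdiff
    rw [← union_sdiff_cancel_left (hdisj U hU), ← union_sdiff_cancel_left (hdisj V hV)]
    exact congrArg (· \ A) hUV

theorem sum_powerset_mul_sum_pow [CommSemiring R] (c : Finset ι → R) (L : ι → R) (S : Finset ι)
    (h : ℕ) :
    ∑ T ∈ S.powerset, c T * (∑ p ∈ T, L p) ^ h
      = ∑ τ ∈ Fintype.piFinset fun _ : Fin h => S,
          (∑ T ∈ Icc (univ.image τ) S, c T) * ∏ i, L (τ i) := by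
  simp_rw [sum_pow', mul_sum, sum_mul]
  refine sum_comm' fun T τ => ?_
  simp only [mem_powerset, Fintype.mem_piFinset, mem_Icc, image_subset_iff, mem_univ, true_implies]
  exact ⟨fun ⟨hTS, hτ⟩ => ⟨⟨hτ, hTS⟩, fun i => hTS (hτ i)⟩, fun ⟨⟨hτ, hTS⟩, _⟩ => ⟨hTS, hτ⟩⟩

theorem prod_image_le_of_one_le₀ {κ : Type*} [CommSemiring R] [PartialOrder R] [IsOrderedRing R]
    {s : Finset κ} {τ : κ → ι} {w : ι → R} (hw : ∀ p ∈ s.image τ, 1 ≤ w p) :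
    ∏ p ∈ s.image τ, w p ≤ ∏ i ∈ s, w (τ i) := by
  rw [prod_comp w τ]
  refine prod_le_prod (fun p hp => zero_le_one.trans (hw p hp)) fun p hp => ?_
  obtain ⟨i, hi, rfl⟩ := mem_image.mp hp
  exact le_self_pow₀ (hw _ hp) (card_ne_zero_of_mem (mem_filter.mpr ⟨hi, rfl⟩))

variable [NormedCommRing R] [NormOneClass R]

theorem norm_prod_neg_mul_prod_one_sub_le {g : ι → R} {w : ι → ℝ} {A S : Finset ι} (hA : A ⊆ S)
    (hg : ∀ p ∈ S, ‖g p‖ ≤ ‖1 - g p‖ * w p) :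
    ‖(∏ p ∈ A, -g p) * ∏ p ∈ S \ A, (1 - g p)‖ ≤ (∏ p ∈ S, ‖1 - g p‖) * ∏ p ∈ A, w p := by
  calc _ ≤ (∏ p ∈ A, ‖-g p‖) * ∏ p ∈ S \ A, ‖1 - g p‖ :=
        (norm_mul_le _ _).trans <| mul_le_mul (Finset.norm_prod_le _ _) (Finset.norm_prod_le _ _)
          (norm_nonneg _) (prod_nonneg fun _ _ => norm_nonneg _)
    _ ≤ (∏ p ∈ A, ‖1 - g p‖ * w p) * ∏ p ∈ S \ A, ‖1 - g p‖ := by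
        gcongr with p hp
        rw [norm_neg]
        exact hg p (hA hp)
    _ = _ := by rw [prod_mul_distrib, ← prod_sdiff hA]; ring

theorem norm_sum_powerset_prod_neg_mul_sum_pow_le {g L : ι → R} {w : ι → ℝ} {S : Finset ι}
    (hw : ∀ p ∈ S, 1 ≤ w p) (hg : ∀ p ∈ S, ‖g p‖ ≤ ‖1 - g p‖ * w p) (h : ℕ) :
    ‖∑ T ∈ S.powerset, (∏ p ∈ T, -g p) * (∑ p ∈ T, L p) ^ h‖
      ≤ (∏ p ∈ S, ‖1 - g p‖) * (∑ p ∈ S, w p * ‖L p‖) ^ h := by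
  rw [sum_powerset_mul_sum_pow, sum_pow', mul_sum]
  refine (norm_sum_le _ _).trans (sum_le_sum fun τ hτ => ?_)
  have hA : univ.image τ ⊆ S := image_subset_iff.mpr fun i _ => Fintype.mem_piFinset.mp hτ i
  rw [sum_Icc_prod _ hA]
  simp_rw [← sub_eq_add_neg]
  calc _ ≤ ‖(∏ p ∈ univ.image τ, -g p) * ∏ p ∈ S \ univ.image τ, (1 - g p)‖
          * ∏ i, ‖L (τ i)‖ :=
        (norm_mul_le _ _).trans <|
          mul_le_mul_of_nonneg_left (Finset.norm_prod_le _ _) (norm_nonneg _)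
    _ ≤ ((∏ p ∈ S, ‖1 - g p‖) * ∏ i, w (τ i)) * ∏ i, ‖L (τ i)‖ := by
        gcongr
        exact (norm_prod_neg_mul_prod_one_sub_le hA hg).trans <| mul_le_mul_of_nonneg_left
          (prod_image_le_of_one_le₀ fun p hp => hw p (hA hp))
          (prod_nonneg fun _ _ => norm_nonneg _)
    _ = _ := by rw [mul_assoc, ← prod_mul_distrib]

end PowersetSums

theorem Nat.sum_divisors_eq_sum_powerset_primeFactors {M : Type*} [AddCommMonoid M] {n : ℕ}
    (hn : Squarefree n) (F : ℕ → M) :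
    ∑ d ∈ n.divisors, F d = ∑ T ∈ n.primeFactors.powerset, F (∏ p ∈ T, p) := by
  rw [← Nat.divisors_filter_squarefree_of_squarefree hn,
    Nat.sum_divisors_filter_squarefree hn.ne_zero, Nat.factors_eq]
  simp [Finset.prod_val]

theorem map_prod_of_prime {M : Type*} [CommMonoid M] {f : ℕ → M} (hf1 : f 1 = 1)
    (hfmul : ∀ m n : ℕ, Nat.Coprime m n → f (m * n) = f m * f n)
    {T : Finset ℕ} (hT : ∀ p ∈ T, p.Prime) : f (∏ p ∈ T, p) = ∏ p ∈ T, f p := by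
  induction T using Finset.induction_on with
  | empty => simp [hf1]
  | @insert q T hq ih =>
    have hT' : ∀ p ∈ T, p.Prime := fun p hp => hT p (mem_insert_of_mem hp)
    have hcop : Nat.Coprime q (∏ p ∈ T, p) := Nat.Coprime.prod_right fun p hp =>
      (Nat.coprime_primes (hT q (mem_insert_self q T)) (hT' p hp)).mpr
        (ne_of_mem_of_not_mem hp hq).symm
    rw [prod_insert hq, prod_insert hq, hfmul q _ hcop, ih hT']

theorem mul_moebius_prod_of_prime {R : Type*} [CommRing R] {f : ℕ → R} (hf1 : f 1 = 1)
    (hfmul : ∀ m n : ℕ, Nat.Coprime m n → f (m * n) = f m * f n)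
    {T : Finset ℕ} (hT : ∀ p ∈ T, p.Prime) :
    f (∏ p ∈ T, p) * (ArithmeticFunction.moebius (∏ p ∈ T, p) : R) = ∏ p ∈ T, -f p := by
  rw [map_prod_of_prime hf1 hfmul hT,
    ArithmeticFunction.isMultiplicative_moebius.map_prod_of_prime T hT, Int.cast_prod,
    ← prod_mul_distrib]
  refine prod_congr rfl fun p hp => ?_
  rw [ArithmeticFunction.moebius_apply_prime (hT p hp)]
  simp

theorem sum_divisors_mul_moebius_mul_log_pow {f : ℕ → ℂ} (hf1 : f 1 = 1)
    (hfmul : ∀ m n : ℕ, Nat.Coprime m n → f (m * n) = f m * f n)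
    {n : ℕ} (hn : Squarefree n) (h : ℕ) :
    ∑ b ∈ n.divisors,
        f b * ((ArithmeticFunction.moebius b : ℤ) : ℂ) * (Real.log b : ℂ) ^ h
      = ∑ T ∈ n.primeFactors.powerset, (∏ p ∈ T, -f p) * (∑ p ∈ T, (Real.log p : ℂ)) ^ h := by
  rw [Nat.sum_divisors_eq_sum_powerset_primeFactors hn]
  refine sum_congr rfl fun T hT => ?_
  have hTp : ∀ p ∈ T, p.Prime := fun p hp => Nat.prime_of_mem_primeFactors (mem_powerset.mp hT hp)
  rw [mul_moebius_prod_of_prime hf1 hfmul hTp, Nat.cast_prod, Real.log_prod, Complex.ofReal_sum]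
  exact fun p hp => Nat.cast_ne_zero.mpr (hTp p hp).ne_zero

theorem norm_le_norm_one_sub_mul_div_min {R : Type*} [NormedRing R] {κ : ℝ} {z : R}
    (hz : ‖z‖ ≤ κ) (hz1 : z ≠ 1) : ‖z‖ ≤ ‖1 - z‖ * (κ / min ‖z - 1‖ 1) := by
  have hm : 0 < min ‖z - 1‖ 1 := lt_min (norm_pos_iff.mpr (sub_ne_zero.mpr hz1)) one_pos
  rw [norm_sub_rev, mul_div_assoc', le_div_iff₀ hm, mul_comm _ κ]
  exact mul_le_mul hz (min_le_left _ _) hm.le ((norm_nonneg _).trans hz)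

theorem moebius_log_sum_bound_general (κ ε : ℝ) (hκ : 1 < κ) (N : ℕ)
    (f : ℕ → ℂ) (hf1 : f 1 = 1)
    (hfmul : ∀ m n : ℕ, Nat.Coprime m n → f (m * n) = f m * f n)
    (s' : ℕ) (hs : Squarefree s')
    (hfp : ∀ p : ℕ, p.Prime → p ∣ s' → ‖f p‖ ≤ κ ∧ f p ≠ 1)
    (hsum : ∑ p ∈ s'.primeFactors, Real.log p / min ‖f p - 1‖ 1
      ≤ ε * Real.log N / κ)
    (h : ℕ) :
    ‖∑ b ∈ s'.divisors,
        f b * ((ArithmeticFunction.moebius b : ℤ) : ℂ) * (Real.log b : ℂ) ^ h‖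
      ≤ (∏ p ∈ s'.primeFactors, ‖1 - f p‖) * (ε * Real.log N) ^ h := by
  have hfp' (p : ℕ) (hp : p ∈ s'.primeFactors) : ‖f p‖ ≤ κ ∧ f p ≠ 1 :=
    hfp p (Nat.prime_of_mem_primeFactors hp) (Nat.dvd_of_mem_primeFactors hp)
  have hm (p : ℕ) (hp : p ∈ s'.primeFactors) : 0 < min ‖f p - 1‖ 1 :=
    lt_min (norm_pos_iff.mpr (sub_ne_zero.mpr (hfp' p hp).2)) one_pos
  have hw (p : ℕ) (hp : p ∈ s'.primeFactors) : 1 ≤ κ / min ‖f p - 1‖ 1 :=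
    (one_le_div (hm p hp)).mpr ((min_le_right _ _).trans hκ.le)
  rw [sum_divisors_mul_moebius_mul_log_pow hf1 hfmul hs]
  refine (norm_sum_powerset_prod_neg_mul_sum_pow_le hw
    (fun p hp => norm_le_norm_one_sub_mul_div_min (hfp' p hp).1 (hfp' p hp).2) h).trans ?_
  have hlog (p : ℕ) : ‖(Real.log p : ℂ)‖ = Real.log p := by
    rw [Complex.norm_real, Real.norm_eq_abs, abs_of_nonneg (Real.log_natCast_nonneg p)]
  gcongr
  calc ∑ p ∈ s'.primeFactors, κ / min ‖f p - 1‖ 1 * ‖(Real.log p : ℂ)‖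
      = κ * ∑ p ∈ s'.primeFactors, Real.log p / min ‖f p - 1‖ 1 := by
        rw [mul_sum]; exact sum_congr rfl fun p _ => by rw [hlog]; ring
    _ ≤ κ * (ε * Real.log N / κ) := by gcongr
    _ = ε * Real.log N := by field_simp

/-- Multinomial bound: `|∑_{b ∣ s'} f(b) μ(b) (log b)^h| ≤ (∏_{p ∣ s'} |1 − f(p)|)(ε log N)^h`
for squarefree `s'` all of whose prime factors satisfy `|f(p)| ≤ κ`, `f(p) ≠ 1` and
`∑_{p ∣ s'} log p / min{|f(p) − 1|, 1} ≤ ε log N / κ`. -/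
theorem moebius_log_sum_bound (κ ε : ℝ) (hκ : 1 < κ) (hε : 0 < ε)
    (N : ℕ) (hN : 2 ≤ N)
    (f : ℕ → ℂ) (hf1 : f 1 = 1)
    (hfmul : ∀ m n : ℕ, Nat.Coprime m n → f (m * n) = f m * f n)
    (s' : ℕ) (hs : Squarefree s')
    (hfp : ∀ p : ℕ, p.Prime → p ∣ s' → ‖f p‖ ≤ κ ∧ f p ≠ 1)
    (hsum : ∑ p ∈ s'.primeFactors, Real.log p / min ‖f p - 1‖ 1
      ≤ ε * Real.log N / κ)
    (h : ℕ) (hh : 1 ≤ h) :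
    ‖∑ b ∈ s'.divisors,
        f b * ((ArithmeticFunction.moebius b : ℤ) : ℂ) * (Real.log b : ℂ) ^ h‖
      ≤ (∏ p ∈ s'.primeFactors, ‖1 - f p‖) * (ε * Real.log N) ^ h :=
  moebius_log_sum_bound_general κ ε hκ N f hf1 hfmul s' hs hfp hsum h
end
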